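/- Let f: 2^U → ℝ≥0 be submodular and nonnegative, let k ≥ 1, and let O be a maximizer of f over subsets of size at most k. Suppose A and B are disjoint subsets of U built by the interlaced greedy procedure: starting from A_0 = B_0 = ∅, for i = 1,...,k, a_i maximizes f(A_{i−1} + x) − f(A_{i−1}) over x ∉ A_{i−1} ∪ B_{i−1}, and b_i maximizes f(B_{i−1} + x) − f(B_{i−1}) over x ∉ A_i ∪ B_{i−1} (with dummy elements of zero marginal gain available so the procedure is always defined). Then max{f(A_k), f(B_k)} ≥ f(O)/4. -/

import Mathlib

/-!
Since `A` and `B` are disjoint, submodularity gives `f O ≤ f (O ∪ A) + f (O ∪ B)`. Add `O` to `A`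
by first inserting the elements of `O ∩ B` in the order in which they entered `B`, then those of
`O \ (A ∪ B)`, and symmetrically for `B`. Every marginal gain paid on the way is dominated by one
of the `2k` greedy gains (nonnegative thanks to the dummy elements): `b i` by the gain of `a i`,
`a i` by that of `b (i - 1)`, and, as long as the interlaced sequence `a 0, b 0, a 1, …` stays
inside `O`, `a i` and `b i` by their own gains. Switching between the two rules where this prefix
ends makes the assignment injective, and the elements of `O \ (A ∪ B)`, available at every step,
fill the remaining gains. As the greedy gains add up to at most `f A + f B`, we get
`f O ≤ 2 (f A + f B)`.
-/

open Finset

section Counting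

variable {ι ι' κ M : Type*} [AddCommMonoid M] [LinearOrder M] [IsOrderedAddMonoid M]

theorem Finset.sum_le_sum_of_card_le_of_forall_le {s : Finset ι} {t : Finset κ} {u : ι → M}
    {v : κ → M} (hcard : #s ≤ #t) (hv : ∀ j ∈ t, 0 ≤ v j)
    (huv : ∀ i ∈ s, ∀ j ∈ t, u i ≤ v j) : ∑ i ∈ s, u i ≤ ∑ j ∈ t, v j := by
  rcases t.eq_empty_or_nonempty with rfl | ht
  · rw [card_empty, Nat.le_zero, card_eq_zero] at hcard
    simp [hcard]
  calc ∑ i ∈ s, u i ≤ #s • t.inf' ht v :=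
        sum_le_card_nsmul _ _ _ fun i hi => le_inf' ht _ fun j hj => huv i hi j hj
    _ ≤ #t • t.inf' ht v := nsmul_le_nsmul_left (le_inf' ht _ hv) hcard
    _ ≤ ∑ j ∈ t, v j := card_nsmul_le_sum _ _ _ fun j hj => inf'_le _ hj

theorem Finset.sum_add_sum_le_sum_of_injOn [DecidableEq κ] {I : Finset ι} {J : Finset ι'}
    {S : Finset κ} {σ : ι → κ} {u : ι → M} {w : ι' → M} {v : κ → M} (hσ : Set.InjOn σ I)
    (hσS : ∀ i ∈ I, σ i ∈ S) (hcard : #I + #J ≤ #S) (hv : ∀ s ∈ S, 0 ≤ v s)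
    (hu : ∀ i ∈ I, u i ≤ v (σ i)) (hw : ∀ j ∈ J, ∀ s ∈ S, w j ≤ v s) :
    ∑ i ∈ I, u i + ∑ j ∈ J, w j ≤ ∑ s ∈ S, v s := by
  have himS : I.image σ ⊆ S := image_subset_iff.mpr hσS
  have hfree : #J ≤ #(S \ I.image σ) := by
    rw [card_sdiff_of_subset himS, card_image_of_injOn hσ]
    omega
  rw [← sum_sdiff himS, sum_image hσ, add_comm]
  gcongr with i hi
  · exact sum_le_sum_of_card_le_of_forall_le hfree (fun s hs => hv s (mem_sdiff.mp hs).1)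
      fun j hj s hs => hw j hj s (mem_sdiff.mp hs).1
  · exact hu i hi

end Counting

def IsSubmodular {U : Type*} [DecidableEq U] (f : Finset U → ℝ) : Prop :=
  ∀ X Y : Finset U, f (X ∪ Y) + f (X ∩ Y) ≤ f X + f Y

namespace IsSubmodular

variable {U : Type*} [DecidableEq U] {f : Finset U → ℝ}

theorem marginal_antitone (hf : IsSubmodular f) {X Y : Finset U} {x : U} (hXY : X ⊆ Y)
    (hx : x ∉ Y) : f (insert x Y) - f Y ≤ f (insert x X) - f X := by
  have h := hf (insert x X) Y
  rw [insert_union, union_eq_right.mpr hXY, insert_inter_of_notMem hx,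
    inter_eq_left.mpr hXY] at h
  linarith

theorem le_add_sum_marginal (hf : IsSubmodular f) {S S' T : Finset U} (hSS' : S ⊆ S')
    (hT : Disjoint T S') : f (S' ∪ T) ≤ f S' + ∑ x ∈ T, (f (insert x S) - f S) := by
  induction T using Finset.induction_on with
  | empty => simp
  | insert x T hxT ih =>
    rw [disjoint_insert_left] at hT
    have hx : x ∉ S' ∪ T := by simp [hT.1, hxT]
    have hstep := hf.marginal_antitone (hSS'.trans subset_union_left) hx
    rw [union_insert, sum_insert hxT]
    linarith [ih hT.2]

end IsSubmodular

def HasNullElements {U : Type*} [DecidableEq U] (f : Finset U → ℝ) (n : ℕ) : Prop :=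
  ∀ S : Finset U, #S < n → ∃ x ∉ S, ∀ T, f (insert x T) = f T

structure IsInsertChain {U : Type*} [DecidableEq U] (S : ℕ → Finset U) (s : ℕ → U) (k : ℕ) :
    Prop where
  zero : S 0 = ∅
  succ : ∀ i < k, S (i + 1) = insert (s i) (S i)

namespace IsInsertChain

variable {U : Type*} [DecidableEq U] {S : ℕ → Finset U} {s : ℕ → U} {k : ℕ}

theorem mono (hS : IsInsertChain S s k) {i j : ℕ} (hij : i ≤ j) (hj : j ≤ k) : S i ⊆ S j := by
  induction j, hij using Nat.le_induction with
  | base => exact Subset.rfl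
  | succ j _ ih =>
    rw [hS.succ j (by omega)]
    exact (ih (by omega)).trans (subset_insert _ _)

theorem mem (hS : IsInsertChain S s k) {i : ℕ} (hi : i < k) : s i ∈ S k :=
  hS.mono hi le_rfl (by rw [hS.succ i hi]; exact mem_insert_self _ _)

theorem card_le (hS : IsInsertChain S s k) {i : ℕ} (hi : i ≤ k) : #(S i) ≤ i := by
  induction i with
  | zero => simp [hS.zero]
  | succ i ih =>
    rw [hS.succ i (by omega)]
    exact (card_insert_le _ _).trans (Nat.succ_le_succ (ih (by omega)))

theorem subset_of_forall_mem (hS : IsInsertChain S s k) {O : Finset U} {i : ℕ} (hi : i ≤ k)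
    (hO : ∀ j < i, s j ∈ O) : S i ⊆ O := by
  induction i with
  | zero => simp [hS.zero]
  | succ i ih =>
    rw [hS.succ i (by omega)]
    exact insert_subset (hO i (by omega)) (ih (by omega) fun j hj => hO j (by omega))

theorem card_inter (hS : IsInsertChain S s k) (hs : ∀ i < k, s i ∉ S i) (O : Finset U) :
    #(O ∩ S k) = #{i ∈ range k | s i ∈ O} := by
  suffices ∀ n ≤ k, #(O ∩ S n) = #{i ∈ range n | s i ∈ O} from this k le_rfl
  intro n hn
  induction n with
  | zero => simp [hS.zero]
  | succ n ih =>
    rw [hS.succ n hn, range_add_one, filter_insert]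
    by_cases h : s n ∈ O
    · have hnew : s n ∉ O ∩ S n := fun hm => hs n hn (mem_inter.mp hm).2
      rw [inter_insert_of_mem h, if_pos h, card_insert_of_notMem hnew,
        card_insert_of_notMem (by simp), ih (by omega)]
    · rw [inter_insert_of_notMem h, if_neg h, ih (by omega)]

theorem apply_union_inter_eq (hS : IsInsertChain S s k) (f : Finset U → ℝ) (W O : Finset U) :
    f (W ∪ (O ∩ S k)) =
      f W + ∑ i ∈ range k with s i ∈ O,
        (f (insert (s i) (W ∪ (O ∩ S i))) - f (W ∪ (O ∩ S i))) := by
  suffices ∀ n ≤ k, f (W ∪ (O ∩ S n)) = f W + ∑ i ∈ range n with s i ∈ O,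
      (f (insert (s i) (W ∪ (O ∩ S i))) - f (W ∪ (O ∩ S i))) from this k le_rfl
  intro n hn
  induction n with
  | zero => simp [hS.zero]
  | succ n ih =>
    rw [hS.succ n hn, range_add_one, filter_insert]
    by_cases h : s n ∈ O
    · rw [inter_insert_of_mem h, if_pos h, sum_insert (by simp), union_insert, ih (by omega)]
      ring
    · rw [inter_insert_of_notMem h, if_neg h, ih (by omega)]

end IsInsertChain

/-- With `P i := a i ∈ O` and `Q i := b i ∈ O`, `t` is the number of `a`'s in the longest prefix of
`a 0, b 0, a 1, b 1, …` that lies in `O` (capped at `k`). -/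
theorem exists_interlaced_prefix (P Q : ℕ → Prop) (k : ℕ) :
    ∃ t ≤ k, (∀ i < t, P i) ∧ (∀ i, i + 1 < t → Q i) ∧
      (t < k → P t → 0 < t ∧ ¬ Q (t - 1)) := by
  classical
  have hex : ∃ n, n = k ∨ ¬ P n ∨ (0 < n ∧ ¬ Q (n - 1)) := ⟨k, Or.inl rfl⟩
  refine ⟨Nat.find hex, Nat.find_min' hex (Or.inl rfl), fun i hi => ?_, fun i hi => ?_,
    fun hk hP => ?_⟩
  · have := Nat.find_min hex hi
    tauto
  · have := Nat.find_min hex hi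
    push Not at this
    exact this.2.2 (Nat.succ_pos i)
  · rcases Nat.find_spec hex with h | h | h
    · omega
    · exact absurd hP h
    · exact h

structure IsInterlacedGreedy {U : Type*} [DecidableEq U] (f : Finset U → ℝ) (k : ℕ)
    (a b : ℕ → U) (A B : ℕ → Finset U) : Prop where
  chainA : IsInsertChain A a k
  chainB : IsInsertChain B b k
  a_notMem : ∀ i < k, a i ∉ A i ∪ B i
  b_notMem : ∀ i < k, b i ∉ A (i + 1) ∪ B i
  a_greedy : ∀ i < k, ∀ x ∉ A i ∪ B i,
    f (insert x (A i)) - f (A i) ≤ f (A (i + 1)) - f (A i)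
  b_greedy : ∀ i < k, ∀ x ∉ A (i + 1) ∪ B i,
    f (insert x (B i)) - f (B i) ≤ f (B (i + 1)) - f (B i)

namespace IsInterlacedGreedy

variable {U : Type*} [DecidableEq U] {f : Finset U → ℝ} {k : ℕ} {a b : ℕ → U}
  {A B : ℕ → Finset U} {O S : Finset U} {i : ℕ} {x : U}

theorem marginal_le_gainA (hf : IsSubmodular f) (h : IsInterlacedGreedy f k a b A B)
    (hi : i < k) (hAS : A i ⊆ S) (hxS : x ∉ S) (hx : x ∉ A i ∪ B i) :
    f (insert x S) - f S ≤ f (A (i + 1)) - f (A i) :=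
  (hf.marginal_antitone hAS hxS).trans (h.a_greedy i hi x hx)

theorem marginal_le_gainB (hf : IsSubmodular f) (h : IsInterlacedGreedy f k a b A B)
    (hi : i < k) (hBS : B i ⊆ S) (hxS : x ∉ S) (hx : x ∉ A (i + 1) ∪ B i) :
    f (insert x S) - f S ≤ f (B (i + 1)) - f (B i) :=
  (hf.marginal_antitone hBS hxS).trans (h.b_greedy i hi x hx)

theorem gainA_nonneg (h : IsInterlacedGreedy f k a b A B)
    (hnull : HasNullElements f (2 * k)) (hi : i < k) :
    0 ≤ f (A (i + 1)) - f (A i) := by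
  have hcard : #(A i ∪ B i) < 2 * k := by
    have := card_union_le (A i) (B i)
    have := h.chainA.card_le hi.le
    have := h.chainB.card_le hi.le
    omega
  obtain ⟨x, hx, hnx⟩ := hnull _ hcard
  simpa [hnx] using h.a_greedy i hi x hx

theorem gainB_nonneg (h : IsInterlacedGreedy f k a b A B)
    (hnull : HasNullElements f (2 * k)) (hi : i < k) :
    0 ≤ f (B (i + 1)) - f (B i) := by
  have hcard : #(A (i + 1) ∪ B i) < 2 * k := by
    have := card_union_le (A (i + 1)) (B i)
    have := h.chainA.card_le (i := i + 1) hi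
    have := h.chainB.card_le hi.le
    omega
  obtain ⟨x, hx, hnx⟩ := hnull _ hcard
  simpa [hnx] using h.b_greedy i hi x hx

theorem b_notMem_union_inter (h : IsInterlacedGreedy f k a b A B) (hAB : Disjoint (A k) (B k))
    (hi : i < k) : b i ∉ A k ∪ (O ∩ B i) := by
  rw [mem_union, not_or]
  exact ⟨disjoint_right.mp hAB (h.chainB.mem hi),
    fun hm => h.b_notMem i hi (mem_union_right _ (mem_inter.mp hm).2)⟩

theorem a_notMem_union_inter (h : IsInterlacedGreedy f k a b A B) (hAB : Disjoint (A k) (B k))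
    (hi : i < k) : a i ∉ B k ∪ (O ∩ A i) := by
  rw [mem_union, not_or]
  exact ⟨disjoint_left.mp hAB (h.chainA.mem hi),
    fun hm => h.a_notMem i hi (mem_union_left _ (mem_inter.mp hm).2)⟩

theorem marginal_b_le_gainA (hf : IsSubmodular f) (h : IsInterlacedGreedy f k a b A B)
    (hAB : Disjoint (A k) (B k)) (hi : i < k) :
    f (insert (b i) (A k ∪ (O ∩ B i))) - f (A k ∪ (O ∩ B i)) ≤ f (A (i + 1)) - f (A i) :=
  h.marginal_le_gainA hf hi ((h.chainA.mono hi.le le_rfl).trans subset_union_left)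
    (h.b_notMem_union_inter hAB hi)
    fun hm => h.b_notMem i hi (union_subset_union (h.chainA.mono (by omega) hi) Subset.rfl hm)

theorem marginal_b_le_gainB (hf : IsSubmodular f) (h : IsInterlacedGreedy f k a b A B)
    (hAB : Disjoint (A k) (B k)) (hi : i < k) (hBO : B i ⊆ O) :
    f (insert (b i) (A k ∪ (O ∩ B i))) - f (A k ∪ (O ∩ B i)) ≤ f (B (i + 1)) - f (B i) :=
  h.marginal_le_gainB hf hi (subset_inter hBO Subset.rfl |>.trans subset_union_right)
    (h.b_notMem_union_inter hAB hi) (h.b_notMem i hi)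

theorem marginal_a_le_gainA (hf : IsSubmodular f) (h : IsInterlacedGreedy f k a b A B)
    (hAB : Disjoint (A k) (B k)) (hi : i < k) (hAO : A i ⊆ O) :
    f (insert (a i) (B k ∪ (O ∩ A i))) - f (B k ∪ (O ∩ A i)) ≤ f (A (i + 1)) - f (A i) :=
  h.marginal_le_gainA hf hi (subset_inter hAO Subset.rfl |>.trans subset_union_right)
    (h.a_notMem_union_inter hAB hi) (h.a_notMem i hi)

theorem marginal_a_le_gainB_pred (hf : IsSubmodular f) (h : IsInterlacedGreedy f k a b A B)
    (hAB : Disjoint (A k) (B k)) (hi : i < k) (hi0 : 0 < i) :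
    f (insert (a i) (B k ∪ (O ∩ A i))) - f (B k ∪ (O ∩ A i)) ≤
      f (B (i - 1 + 1)) - f (B (i - 1)) := by
  refine h.marginal_le_gainB hf (by omega)
    ((h.chainB.mono (by omega) le_rfl).trans subset_union_left)
    (h.a_notMem_union_inter hAB hi) ?_
  rw [Nat.sub_add_cancel hi0]
  exact fun hm =>
    h.a_notMem i hi (union_subset_union Subset.rfl (h.chainB.mono (by omega) hi.le) hm)

theorem card_charged_le (h : IsInterlacedGreedy f k a b A B) (hAB : Disjoint (A k) (B k))
    (hO : #O ≤ k) :
    #{i ∈ range k | a i ∈ O} + #{i ∈ range k | b i ∈ O} + #(O \ (A k ∪ B k)) ≤ k := by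
  rw [← h.chainA.card_inter (fun i hi hm => h.a_notMem i hi (mem_union_left _ hm)),
    ← h.chainB.card_inter (fun i hi hm => h.b_notMem i hi (mem_union_right _ hm)),
    ← card_union_of_disjoint (hAB.mono inter_subset_right inter_subset_right),
    ← inter_union_distrib_left, add_comm, card_sdiff_add_card_inter]
  exact hO

theorem sum_chargedA_le (hf : IsSubmodular f) (h : IsInterlacedGreedy f k a b A B)
    (hAB : Disjoint (A k) (B k))
    (hnull : HasNullElements f (2 * k)) (hO : #O ≤ k)
    {t : ℕ} (ht : ∀ j < t, a j ∈ O) :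
    ∑ i ∈ {i ∈ range k | a i ∈ O} with i < t,
        (f (insert (a i) (B k ∪ (O ∩ A i))) - f (B k ∪ (O ∩ A i))) +
      ∑ i ∈ {i ∈ range k | b i ∈ O} with ¬ i < t,
        (f (insert (b i) (A k ∪ (O ∩ B i))) - f (A k ∪ (O ∩ B i))) +
      ∑ r ∈ O \ (A k ∪ B k), (f (insert r (A k)) - f (A k)) ≤ f (A k) - f (A 0) := by
  have key := sum_add_sum_le_sum_of_injOn (S := range k) (σ := Sum.elim id id)
    (u := Sum.elim (fun i => f (insert (a i) (B k ∪ (O ∩ A i))) - f (B k ∪ (O ∩ A i)))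
      (fun i => f (insert (b i) (A k ∪ (O ∩ B i))) - f (A k ∪ (O ∩ B i))))
    (w := fun r => f (insert r (A k)) - f (A k)) (v := fun i => f (A (i + 1)) - f (A i))
    (I := ({i ∈ range k | a i ∈ O}.filter (· < t)).disjSum
      ({i ∈ range k | b i ∈ O}.filter (¬ · < t)))
    (J := O \ (A k ∪ B k)) ?_ ?_ ?_ ?_ ?_ ?_
  · rw [sum_disjSum] at key
    exact key.trans_eq (sum_range_sub (fun i => f (A i)) k)
  · rintro (i | i) hi (j | j) hj hij <;> simp_all
    all_goals omega
  · rintro (i | i) hi <;> simp_all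
  · have := h.card_charged_le hAB hO
    rw [card_disjSum, card_range]
    have := card_filter_le {i ∈ range k | a i ∈ O} (· < t)
    have := card_filter_le {i ∈ range k | b i ∈ O} (¬ · < t)
    omega
  · exact fun i hi => h.gainA_nonneg hnull (mem_range.mp hi)
  · rintro (i | i) hi <;> simp only [inl_mem_disjSum, inr_mem_disjSum, mem_filter, mem_range] at hi
    · exact h.marginal_a_le_gainA hf hAB hi.1.1
        (h.chainA.subset_of_forall_mem hi.1.1.le fun j hj => ht j (hj.trans hi.2))
    · exact h.marginal_b_le_gainA hf hAB hi.1.1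
  · intro r hr i hi
    rw [mem_sdiff, notMem_union] at hr
    rw [mem_range] at hi
    exact h.marginal_le_gainA hf hi (h.chainA.mono hi.le le_rfl) hr.2.1
      (notMem_union.mpr ⟨fun hm => hr.2.1 (h.chainA.mono hi.le le_rfl hm),
        fun hm => hr.2.2 (h.chainB.mono hi.le le_rfl hm)⟩)

theorem sum_chargedB_le (hf : IsSubmodular f) (h : IsInterlacedGreedy f k a b A B)
    (hAB : Disjoint (A k) (B k))
    (hnull : HasNullElements f (2 * k)) (hO : #O ≤ k)
    {t : ℕ} (ht : ∀ j, j + 1 < t → b j ∈ O) (hbd : t < k → a t ∈ O → 0 < t ∧ b (t - 1) ∉ O) :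
    ∑ i ∈ {i ∈ range k | b i ∈ O} with i < t,
        (f (insert (b i) (A k ∪ (O ∩ B i))) - f (A k ∪ (O ∩ B i))) +
      ∑ i ∈ {i ∈ range k | a i ∈ O} with ¬ i < t,
        (f (insert (a i) (B k ∪ (O ∩ A i))) - f (B k ∪ (O ∩ A i))) +
      ∑ r ∈ O \ (A k ∪ B k), (f (insert r (B k)) - f (B k)) ≤ f (B k) - f (B 0) := by
  have hpos : ∀ i < k, a i ∈ O → ¬ i < t → 0 < i := by
    intro i hi ha hti
    by_contra h0
    obtain rfl : i = 0 := by omega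
    obtain rfl : t = 0 := by omega
    exact absurd (hbd hi ha).1 (lt_irrefl 0)
  have key := sum_add_sum_le_sum_of_injOn (S := range k) (σ := Sum.elim id (· - 1))
    (u := Sum.elim (fun i => f (insert (b i) (A k ∪ (O ∩ B i))) - f (A k ∪ (O ∩ B i)))
      (fun i => f (insert (a i) (B k ∪ (O ∩ A i))) - f (B k ∪ (O ∩ A i))))
    (w := fun r => f (insert r (B k)) - f (B k)) (v := fun i => f (B (i + 1)) - f (B i))
    (I := ({i ∈ range k | b i ∈ O}.filter (· < t)).disjSum
      ({i ∈ range k | a i ∈ O}.filter (¬ · < t)))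
    (J := O \ (A k ∪ B k)) ?_ ?_ ?_ ?_ ?_ ?_
  · rw [sum_disjSum] at key
    exact key.trans_eq (sum_range_sub (fun i => f (B i)) k)
  · rintro (i | i) hi (j | j) hj hij <;>
      simp only [mem_coe, inl_mem_disjSum, inr_mem_disjSum, mem_filter, mem_range, Sum.elim_inl,
        Sum.elim_inr, id, Sum.inl.injEq, Sum.inr.injEq, reduceCtorEq] at hi hj hij ⊢
    · exact hij
    · have := hpos j hj.1.1 hj.1.2 hj.2
      obtain rfl : j = t := by omega
      exact absurd (hij ▸ hi.1.2) (hbd hj.1.1 hj.1.2).2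
    · have := hpos i hi.1.1 hi.1.2 hi.2
      obtain rfl : i = t := by omega
      exact absurd (hij ▸ hj.1.2) (hbd hi.1.1 hi.1.2).2
    · have := hpos i hi.1.1 hi.1.2 hi.2
      have := hpos j hj.1.1 hj.1.2 hj.2
      omega
  · rintro (i | i) hi <;> simp only [inl_mem_disjSum, inr_mem_disjSum, mem_filter, mem_range] at hi
    · exact mem_range.mpr hi.1.1
    · exact mem_range.mpr (show i - 1 < k by omega)
  · have := h.card_charged_le hAB hO
    rw [card_disjSum, card_range]
    have := card_filter_le {i ∈ range k | b i ∈ O} (· < t)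
    have := card_filter_le {i ∈ range k | a i ∈ O} (¬ · < t)
    omega
  · exact fun i hi => h.gainB_nonneg hnull (mem_range.mp hi)
  · rintro (i | i) hi <;> simp only [inl_mem_disjSum, inr_mem_disjSum, mem_filter, mem_range] at hi
    · exact h.marginal_b_le_gainB hf hAB hi.1.1
        (h.chainB.subset_of_forall_mem hi.1.1.le fun j hj => ht j (by omega))
    · exact h.marginal_a_le_gainB_pred hf hAB hi.1.1 (hpos i hi.1.1 hi.1.2 hi.2)
  · intro r hr i hi
    rw [mem_sdiff, notMem_union] at hr
    rw [mem_range] at hi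
    exact h.marginal_le_gainB hf hi (h.chainB.mono hi.le le_rfl) hr.2.2
      (notMem_union.mpr ⟨fun hm => hr.2.1 (h.chainA.mono hi le_rfl hm),
        fun hm => hr.2.2 (h.chainB.mono hi.le le_rfl hm)⟩)

theorem le_two_mul_add (hf : IsSubmodular f) (hnn : ∀ S, 0 ≤ f S)
    (h : IsInterlacedGreedy f k a b A B) (hAB : Disjoint (A k) (B k))
    (hnull : HasNullElements f (2 * k)) (hO : #O ≤ k) :
    f O ≤ 2 * (f (A k) + f (B k)) := by
  obtain ⟨t, -, hta, htb, hbd⟩ := exists_interlaced_prefix (a · ∈ O) (b · ∈ O) k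
  have hOAB : f O ≤ f (O ∪ A k) + f (O ∪ B k) := by
    have := hf (O ∪ A k) (O ∪ B k)
    rw [← union_inter_distrib_left, disjoint_iff_inter_eq_empty.mp hAB, union_empty] at this
    linarith [hnn (O ∪ A k ∪ (O ∪ B k))]
  have hOA : f (O ∪ A k) ≤ f (A k) +
      ∑ i ∈ range k with b i ∈ O, (f (insert (b i) (A k ∪ (O ∩ B i))) - f (A k ∪ (O ∩ B i))) +
      ∑ r ∈ O \ (A k ∪ B k), (f (insert r (A k)) - f (A k)) := by
    have hsplit : O ∪ A k = A k ∪ (O ∩ B k) ∪ O \ (A k ∪ B k) := by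
      ext x; simp only [mem_union, mem_inter, mem_sdiff]; tauto
    rw [hsplit, ← h.chainB.apply_union_inter_eq]
    exact hf.le_add_sum_marginal subset_union_left
      (disjoint_left.mpr fun x hx hx' => by simp_all)
  have hOB : f (O ∪ B k) ≤ f (B k) +
      ∑ i ∈ range k with a i ∈ O, (f (insert (a i) (B k ∪ (O ∩ A i))) - f (B k ∪ (O ∩ A i))) +
      ∑ r ∈ O \ (A k ∪ B k), (f (insert r (B k)) - f (B k)) := by
    have hsplit : O ∪ B k = B k ∪ (O ∩ A k) ∪ O \ (A k ∪ B k) := by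
      ext x; simp only [mem_union, mem_inter, mem_sdiff]; tauto
    rw [hsplit, ← h.chainA.apply_union_inter_eq]
    exact hf.le_add_sum_marginal subset_union_left
      (disjoint_left.mpr fun x hx hx' => by simp_all)
  have hA := h.sum_chargedA_le hf hAB hnull hO hta
  have hB := h.sum_chargedB_le hf hAB hnull hO htb hbd
  rw [h.chainA.zero] at hA
  rw [h.chainB.zero] at hB
  rw [← sum_filter_add_sum_filter_not _ (· < t)] at hOA hOB
  linarith [hnn ∅]

end IsInterlacedGreedy

theorem stmt_8_general {U : Type*} [DecidableEq U] [Fintype U]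
    (f : Finset U → ℝ)
    (hsub : ∀ X Y : Finset U, f (X ∪ Y) + f (X ∩ Y) ≤ f X + f Y)
    (hnn : ∀ S : Finset U, 0 ≤ f S)
    (k : ℕ) (hk : 1 ≤ k)
    (dummy : U → Prop) [DecidablePred dummy]
    (hdummy : ∀ (S : Finset U) (x : U), dummy x → f (insert x S) = f S)
    (hdcard : 2 * k ≤ (Finset.univ.filter fun x => dummy x).card)
    (O : Finset U) (hOcard : O.card ≤ k)
    (a b : Fin k → U) (A B : ℕ → Finset U)
    (hA0 : A 0 = ∅) (hB0 : B 0 = ∅)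
    (hAsucc : ∀ i : Fin k, A ((i : ℕ) + 1) = insert (a i) (A (i : ℕ)))
    (hBsucc : ∀ i : Fin k, B ((i : ℕ) + 1) = insert (b i) (B (i : ℕ)))
    (haNew : ∀ i : Fin k, a i ∉ A (i : ℕ) ∪ B (i : ℕ))
    (hbNew : ∀ i : Fin k, b i ∉ A ((i : ℕ) + 1) ∪ B (i : ℕ))
    (haGreedy : ∀ i : Fin k, ∀ x : U, x ∉ A (i : ℕ) ∪ B (i : ℕ) →
      f (insert x (A (i : ℕ))) - f (A (i : ℕ)) ≤
        f (insert (a i) (A (i : ℕ))) - f (A (i : ℕ)))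
    (hbGreedy : ∀ i : Fin k, ∀ x : U, x ∉ A ((i : ℕ) + 1) ∪ B (i : ℕ) →
      f (insert x (B (i : ℕ))) - f (B (i : ℕ)) ≤
        f (insert (b i) (B (i : ℕ))) - f (B (i : ℕ)))
    (hdisj : Disjoint (A k) (B k)) :
    f O / 4 ≤ max (f (A k)) (f (B k)) := by
  let a' : ℕ → U := fun i => if hi : i < k then a ⟨i, hi⟩ else a ⟨0, hk⟩
  let b' : ℕ → U := fun i => if hi : i < k then b ⟨i, hi⟩ else b ⟨0, hk⟩
  have ha' : ∀ i (hi : i < k), a' i = a ⟨i, hi⟩ := fun i hi => dif_pos hi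
  have hb' : ∀ i (hi : i < k), b' i = b ⟨i, hi⟩ := fun i hi => dif_pos hi
  have hrun : IsInterlacedGreedy f k a' b' A B :=
    { chainA := ⟨hA0, fun i hi => ha' i hi ▸ hAsucc ⟨i, hi⟩⟩
      chainB := ⟨hB0, fun i hi => hb' i hi ▸ hBsucc ⟨i, hi⟩⟩
      a_notMem := fun i hi => ha' i hi ▸ haNew ⟨i, hi⟩
      b_notMem := fun i hi => hb' i hi ▸ hbNew ⟨i, hi⟩
      a_greedy := fun i hi x hx => hAsucc ⟨i, hi⟩ ▸ haGreedy ⟨i, hi⟩ x hx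
      b_greedy := fun i hi x hx => hBsucc ⟨i, hi⟩ ▸ hbGreedy ⟨i, hi⟩ x hx }
  have hnull : HasNullElements f (2 * k) := by
    intro S hS
    obtain ⟨x, hx, hxS⟩ := exists_mem_notMem_of_card_lt_card (hS.trans_le hdcard)
    exact ⟨x, hxS, fun T => hdummy T x (mem_filter.mp hx).2⟩
  have := hrun.le_two_mul_add hsub hnn hdisj hnull hOcard
  linarith [le_max_left (f (A k)) (f (B k)), le_max_right (f (A k)) (f (B k))]

/-- Interlaced greedy achieves a 1/4 approximation:
`max{f(A_k), f(B_k)} ≥ f(O)/4`. -/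
theorem stmt_8 {U : Type*} [DecidableEq U] [Fintype U]
    (f : Finset U → ℝ)
    (hsub : ∀ X Y : Finset U, f (X ∪ Y) + f (X ∩ Y) ≤ f X + f Y)
    (hnn : ∀ S : Finset U, 0 ≤ f S)
    (k : ℕ) (hk : 1 ≤ k)
    (dummy : U → Prop) [DecidablePred dummy]
    (hdummy : ∀ (S : Finset U) (x : U), dummy x → f (insert x S) = f S)
    (hdcard : 2 * k ≤ (Finset.univ.filter fun x => dummy x).card)
    (O : Finset U) (hOcard : O.card ≤ k)
    (hOopt : ∀ S : Finset U, S.card ≤ k → f S ≤ f O)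
    (hOnodummy : ∀ x ∈ O, ¬ dummy x)
    (a b : Fin k → U) (A B : ℕ → Finset U)
    (hA0 : A 0 = ∅) (hB0 : B 0 = ∅)
    (hAsucc : ∀ i : Fin k, A ((i : ℕ) + 1) = insert (a i) (A (i : ℕ)))
    (hBsucc : ∀ i : Fin k, B ((i : ℕ) + 1) = insert (b i) (B (i : ℕ)))
    (haNew : ∀ i : Fin k, a i ∉ A (i : ℕ) ∪ B (i : ℕ))
    (hbNew : ∀ i : Fin k, b i ∉ A ((i : ℕ) + 1) ∪ B (i : ℕ))
    (haGreedy : ∀ i : Fin k, ∀ x : U, x ∉ A (i : ℕ) ∪ B (i : ℕ) →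
      f (insert x (A (i : ℕ))) - f (A (i : ℕ)) ≤
        f (insert (a i) (A (i : ℕ))) - f (A (i : ℕ)))
    (hbGreedy : ∀ i : Fin k, ∀ x : U, x ∉ A ((i : ℕ) + 1) ∪ B (i : ℕ) →
      f (insert x (B (i : ℕ))) - f (B (i : ℕ)) ≤
        f (insert (b i) (B (i : ℕ))) - f (B (i : ℕ)))
    (hdisj : Disjoint (A k) (B k)) :
    f O / 4 ≤ max (f (A k)) (f (B k)) :=
  stmt_8_general f hsub hnn k hk dummy hdummy hdcard O hOcard a b A B hA0 hB0 hAsucc hBsucc haNew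
    hbNew haGreedy hbGreedy hdisj
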